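/- For n ≥ 8, in any nontrivial quotient q: B'_n → G, the image q(σ_2σ_1^{-1}) has order at least 3. -/

import Mathlib

/-- Relators of the Artin presentation of the braid group on `n` strands.
Generator `i : Fin (n-1)` corresponds to the Artin generator `σ_{i+1}`. -/
def braidRels (n : ℕ) : Set (FreeGroup (Fin (n - 1))) :=
  {r | (∃ i j : Fin (n - 1), (i : ℕ) + 1 = (j : ℕ) ∧
          r = .of i * .of j * .of i * (.of j * .of i * .of j)⁻¹) ∨
       (∃ i j : Fin (n - 1), (i : ℕ) + 2 ≤ (j : ℕ) ∧
          r = .of i * .of j * (.of j * .of i)⁻¹)}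

/-- The braid group on `n` strands. -/
def BraidGroup (n : ℕ) : Type := PresentedGroup (braidRels n)

instance (n : ℕ) : Group (BraidGroup n) := by unfold BraidGroup; infer_instance

/-- `sig n i` is the Artin generator `σ_i` (1-based: `1 ≤ i ≤ n-1`), and `1` otherwise. -/
def sig (n : ℕ) (i : ℕ) : BraidGroup n :=
  if h : 1 ≤ i ∧ i ≤ n - 1 then PresentedGroup.of ⟨i - 1, by omega⟩ else 1

/-- The exponent sum homomorphism `B_n → ℤ`, sending each Artin generator to `1`. -/
def expSum (n : ℕ) : BraidGroup n →* Multiplicative ℤ :=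
  PresentedGroup.toGroup (f := fun _ : Fin (n - 1) => Multiplicative.ofAdd (1 : ℤ))
    (by
      rintro r (⟨i, j, -, rfl⟩ | ⟨i, j, -, rfl⟩) <;>
        simp only [map_mul, map_inv, FreeGroup.lift_apply_of] <;> group)

/-- The Birman–Ko–Lee generator `ρ_{ij}`:
the half twist `(σ_{j-1} ⋯ σ_{i+1}) σ_i (σ_{j-1} ⋯ σ_{i+1})⁻¹`. -/
def rho (n i j : ℕ) : BraidGroup n :=
  (((List.range' (i + 1) (j - 1 - i)).reverse.map (sig n)).prod) * sig n i *
    (((List.range' (i + 1) (j - 1 - i)).reverse.map (sig n)).prod)⁻¹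

/-!
Write `u = σ₂σ₁⁻¹` and let `k ∈ {1, 2}`. Since `u` commutes with `σ₄` and every `σᵢσ₄⁻¹` lies in
`B'_n`, conjugation of `uᵏ` by `B_n` is already realised inside `B'_n`; hence the normal closure
of `uᵏ` in `B'_n` is the normal closure of `uᵏ` in `B_n`, and it suffices that the latter contains
`B'_n`, i.e. that all `σᵢ` become equal in `B_n / ⟨⟨uᵏ⟩⟩`. For `k = 1` this follows by shifting
`σᵢ ↦ σᵢ₊₁` through conjugation by `σᵢσᵢ₊₁σᵢ₊₂`. For `k = 2` the relations
`(σ₃σ₂⁻¹)² = (σ₄σ₃⁻¹)² = 1` together with the braid relations force `σ₂ = σ₄`, so `σ₁` and `σ₂`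
commute, and a commuting pair satisfying the braid relation is equal.
-/

section GroupLemmas

variable {G : Type*} [Group G]

lemma eq_of_braid_of_commute {a b : G} (hab : a * b * a = b * a * b) (hc : Commute a b) :
    a = b := by
  have : a * b * a = a * b * b := by rw [hab, hc.eq]
  exact mul_left_cancel this

lemma mul_inv_mul_eq_of_sq_mul_inv_eq_one {a b : G} (h : (a * b⁻¹) ^ 2 = 1) :
    a * b⁻¹ * a = b :=
  mul_inv_eq_one.mp (by simpa [sq, mul_assoc] using h)

lemma eq_of_braid_of_sq_mul_inv_eq_one {x y z : G} (hxy : x * y * x = y * x * y)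
    (hyz : y * z * y = z * y * z) (hxz : Commute x z)
    (hx : (y * x⁻¹) ^ 2 = 1) (hz : (z * y⁻¹) ^ 2 = 1) : x = z := by
  have hx' : x * y⁻¹ * x = y :=
    mul_inv_mul_eq_of_sq_mul_inv_eq_one (by rw [← inv_eq_one, ← inv_pow, mul_inv_rev, inv_inv, hx])
  have hz' : z * y⁻¹ * z = y := mul_inv_mul_eq_of_sq_mul_inv_eq_one hz
  have : y * x * y = y * z * y :=
    calc y * x * y = x * (z * y⁻¹ * z) * x := by rw [← hxy, hz']
      _ = (x * z) * y⁻¹ * (z * x) := by group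
      _ = (z * x) * y⁻¹ * (x * z) := by rw [hxz.eq]
      _ = z * (x * y⁻¹ * x) * z := by group
      _ = y * z * y := by rw [hx', hyz]
  exact mul_left_cancel (mul_right_cancel this)

end GroupLemmas

namespace Subgroup

variable {G : Type*} [Group G]

lemma normalClosure_le_map_normalClosure {K : Subgroup G} [K.Normal] {b : K}
    (hK : K ⊔ centralizer {(b : G)} = ⊤) :
    normalClosure {(b : G)} ≤ (normalClosure {b}).map K.subtype := by
  refine (closure_le _).mpr fun x hx => ?_
  obtain ⟨_, rfl, hconj⟩ := Group.mem_conjugatesOfSet_iff.mp hx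
  obtain ⟨g, rfl⟩ := isConj_iff.mp hconj
  have hg : g ∈ K ⊔ centralizer {(b : G)} := by rw [hK]; exact mem_top g
  obtain ⟨k, hk, c, hc, rfl⟩ := mem_sup_of_normal_left.mp hg
  have hcb : c * b * c⁻¹ = b := by rw [mem_centralizer_singleton_iff.mp hc, mul_inv_cancel_right]
  let k' : K := ⟨k, hk⟩
  have hmem : k' * b * k'⁻¹ ∈ normalClosure {b} :=
    normalClosure_normal.conj_mem _ (subset_normalClosure (Set.mem_singleton b)) _
  refine ⟨_, hmem, ?_⟩
  calc ((k' * b * k'⁻¹ : K) : G) = k * (c * b * c⁻¹) * k⁻¹ := by rw [hcb]; rfl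
    _ = k * c * b * (k * c)⁻¹ := by group

lemma normalClosure_eq_top_of_le {K : Subgroup G} [K.Normal] {b : K}
    (hK : K ⊔ centralizer {(b : G)} = ⊤) (hle : K ≤ normalClosure {(b : G)}) :
    normalClosure {b} = ⊤ := by
  refine eq_top_iff.mpr fun x _ => ?_
  obtain ⟨y, hy, hyx⟩ := normalClosure_le_map_normalClosure hK (hle x.2)
  rwa [← Subtype.ext hyx]

end Subgroup

lemma MonoidHom.map_ne_one_of_normalClosure_eq_top {G H : Type*} [Group G] [Group H]
    [Nontrivial H] {f : G →* H} (hf : Function.Surjective f) {b : G}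
    (hb : Subgroup.normalClosure {b} = ⊤) : f b ≠ 1 := by
  intro hfb
  have hker : f.ker = ⊤ := top_le_iff.mp
    (hb ▸ Subgroup.normalClosure_le_normal (Set.singleton_subset_iff.mpr hfb))
  obtain ⟨y, hy⟩ := exists_ne (1 : H)
  obtain ⟨x, rfl⟩ := hf y
  exact hy (f.mem_ker.mp (hker ▸ Subgroup.mem_top x))

lemma IsConj.mul_inv_mem_commutator {G : Type*} [Group G] {a b : G} (h : IsConj a b) :
    b * a⁻¹ ∈ commutator G := by
  obtain ⟨c, rfl⟩ := isConj_iff.mp h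
  rw [commutator_def]
  simpa only [commutatorElement_def, mul_inv_cancel_right] using
    Subgroup.commutator_mem_commutator (Subgroup.mem_top c) (Subgroup.mem_top a)

namespace BraidGroup

variable {n : ℕ}

lemma sig_eq_of {i : ℕ} (h1 : 1 ≤ i) (h2 : i ≤ n - 1) :
    sig n i = PresentedGroup.of (rels := braidRels n) ⟨i - 1, by omega⟩ :=
  dif_pos ⟨h1, h2⟩

lemma sig_braid {i : ℕ} (h1 : 1 ≤ i) (h2 : i + 1 ≤ n - 1) :
    sig n i * sig n (i + 1) * sig n i = sig n (i + 1) * sig n i * sig n (i + 1) := by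
  rw [sig_eq_of h1 (by omega), sig_eq_of (by omega) h2]
  exact PresentedGroup.mk_eq_mk_of_mul_inv_mem (Or.inl ⟨_, _, by simp only; omega, rfl⟩)

lemma sig_commute {i j : ℕ} (h1 : 1 ≤ i) (hij : i + 2 ≤ j) (h2 : j ≤ n - 1) :
    Commute (sig n i) (sig n j) := by
  rw [sig_eq_of h1 (by omega), sig_eq_of (by omega) h2]
  exact PresentedGroup.mk_eq_mk_of_mul_inv_mem (Or.inr ⟨_, _, by simp only; omega, rfl⟩)

lemma sig_val_add_one (j : Fin (n - 1)) :
    sig n (j + 1) = PresentedGroup.of (rels := braidRels n) j := by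
  rw [sig_eq_of (by omega) (by omega)]
  rfl

lemma eq_top_of_sig_mem {H : Subgroup (BraidGroup n)}
    (h : ∀ i, 1 ≤ i → i ≤ n - 1 → sig n i ∈ H) : H = ⊤ :=
  eq_top_iff.mpr fun x _ => PresentedGroup.generated_by _ H
    (fun j => sig_val_add_one j ▸ h _ (by omega) (by omega)) x

lemma hom_ext_sig {H : Type*} [Group H] {φ ψ : BraidGroup n →* H}
    (h : ∀ i, 1 ≤ i → i ≤ n - 1 → φ (sig n i) = ψ (sig n i)) : φ = ψ :=
  PresentedGroup.ext fun j => sig_val_add_one j ▸ h (j + 1) (by omega) (by omega)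

lemma expSum_sig {i : ℕ} (h1 : 1 ≤ i) (h2 : i ≤ n - 1) :
    expSum n (sig n i) = Multiplicative.ofAdd 1 := by
  rw [sig_eq_of h1 h2]
  exact PresentedGroup.toGroup.of _

lemma isConj_sig_one_sig {i : ℕ} (h1 : 1 ≤ i) (h2 : i ≤ n - 1) : IsConj (sig n 1) (sig n i) := by
  induction i, h1 using Nat.le_induction with
  | base => rfl
  | succ i hi ih =>
    refine (ih (by omega)).trans (isConj_iff.mpr ⟨sig n i * sig n (i + 1), ?_⟩)
    rw [sig_braid hi h2]
    group

lemma sig_mul_inv_sig_mem_commutator {i j : ℕ} (hi1 : 1 ≤ i) (hi2 : i ≤ n - 1)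
    (hj1 : 1 ≤ j) (hj2 : j ≤ n - 1) : sig n i * (sig n j)⁻¹ ∈ commutator (BraidGroup n) :=
  ((isConj_sig_one_sig hj1 hj2).symm.trans (isConj_sig_one_sig hi1 hi2)).mul_inv_mem_commutator

lemma commutator_sup_centralizer_eq_top {x : BraidGroup n} {m : ℕ} (h1 : 1 ≤ m) (h2 : m ≤ n - 1)
    (hx : Commute (sig n m) x) : commutator (BraidGroup n) ⊔ Subgroup.centralizer {x} = ⊤ :=
  eq_top_of_sig_mem fun i hi1 hi2 => by
    simpa only [inv_mul_cancel_right] using Subgroup.mul_mem_sup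
      (sig_mul_inv_sig_mem_commutator hi1 hi2 h1 h2)
      (Subgroup.mem_centralizer_singleton_iff.mpr hx.eq)

lemma conj_sig_add_one_mul_inv_pow {i : ℕ} (h1 : 1 ≤ i) (h2 : i + 2 ≤ n - 1) (k : ℕ) :
    MulAut.conj (sig n i * sig n (i + 1) * sig n (i + 2)) ((sig n (i + 1) * (sig n i)⁻¹) ^ k) =
      (sig n (i + 2) * (sig n (i + 1))⁻¹) ^ k := by
  have hb₁ := sig_braid (n := n) h1 (by omega)
  have hb₂ := sig_braid (n := n) (i := i + 1) (by omega) h2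
  have hc := (sig_commute (n := n) h1 le_rfl h2).eq
  set a := sig n i
  set b := sig n (i + 1)
  set c := sig n (i + 2)
  have ha : MulAut.conj (a * b * c) a = b :=
    calc a * b * c * a * (a * b * c)⁻¹ = a * b * (c * a) * c⁻¹ * b⁻¹ * a⁻¹ := by group
      _ = (a * b * a) * b⁻¹ * a⁻¹ := by rw [← hc]; group
      _ = b := by rw [hb₁]; group
  have hb : MulAut.conj (a * b * c) b = c :=
    calc a * b * c * b * (a * b * c)⁻¹ = a * (b * c * b) * c⁻¹ * b⁻¹ * a⁻¹ := by group
      _ = (a * c) * a⁻¹ := by rw [hb₂]; group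
      _ = c := by rw [hc]; group
  rw [map_pow, map_mul (MulAut.conj _), map_inv (MulAut.conj _), ha, hb]

section Hom

variable {H : Type*} [Group H] (φ : BraidGroup n →* H)

lemma map_sig_add_one_mul_inv_pow_eq_one {k : ℕ} (h : φ ((sig n 2 * (sig n 1)⁻¹) ^ k) = 1)
    {i : ℕ} (h1 : 1 ≤ i) (h2 : i + 1 ≤ n - 1) : φ ((sig n (i + 1) * (sig n i)⁻¹) ^ k) = 1 := by
  induction i, h1 using Nat.le_induction with
  | base => exact h
  | succ i hi ih =>
    rw [← conj_sig_add_one_mul_inv_pow hi h2 k, MulAut.conj_apply, map_mul, map_mul, map_inv,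
      ih (by omega), mul_one, mul_inv_cancel]

lemma map_sig_eq_map_sig_one (h : φ (sig n 2 * (sig n 1)⁻¹) = 1)
    {i : ℕ} (h1 : 1 ≤ i) (h2 : i ≤ n - 1) : φ (sig n i) = φ (sig n 1) := by
  induction i, h1 using Nat.le_induction with
  | base => rfl
  | succ i hi ih =>
    have := map_sig_add_one_mul_inv_pow_eq_one φ (k := 1) (by rwa [pow_one]) hi h2
    rw [pow_one, map_mul, map_inv, mul_inv_eq_one] at this
    rw [this, ih (by omega)]

lemma commutator_le_ker_of_map_sig_two_mul_inv_eq_one (h : φ (sig n 2 * (sig n 1)⁻¹) = 1) :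
    commutator (BraidGroup n) ≤ φ.ker := by
  have hφ : φ = (zpowersHom H (φ (sig n 1))).comp (expSum n) := hom_ext_sig fun i h1 h2 => by
    rw [MonoidHom.comp_apply, expSum_sig h1 h2, map_sig_eq_map_sig_one φ h h1 h2,
      zpowersHom_apply, toAdd_ofAdd, zpow_one]
  rw [hφ, ← MonoidHom.comap_ker]
  exact (Abelianization.commutator_subset_ker _).trans (MonoidHom.ker_le_comap _ _)

lemma map_sig_two_mul_inv_eq_one_of_sq (hn : 5 ≤ n) (h : φ ((sig n 2 * (sig n 1)⁻¹) ^ 2) = 1) :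
    φ (sig n 2 * (sig n 1)⁻¹) = 1 := by
  have braid {i : ℕ} (h1 : 1 ≤ i) (h2 : i + 1 ≤ n - 1) :
      φ (sig n i) * φ (sig n (i + 1)) * φ (sig n i) =
        φ (sig n (i + 1)) * φ (sig n i) * φ (sig n (i + 1)) := by
    simpa only [map_mul] using congrArg φ (sig_braid h1 h2)
  have sq {i : ℕ} (h1 : 1 ≤ i) (h2 : i + 1 ≤ n - 1) :
      (φ (sig n (i + 1)) * (φ (sig n i))⁻¹) ^ 2 = 1 := by
    simpa only [map_pow, map_mul, map_inv] using map_sig_add_one_mul_inv_pow_eq_one φ h h1 h2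
  have h24 : φ (sig n 2) = φ (sig n 4) :=
    eq_of_braid_of_sq_mul_inv_eq_one (braid (by omega) (by omega)) (braid (by omega) (by omega))
      ((sig_commute (i := 2) (by omega) le_rfl (by omega)).map φ) (sq (by omega) (by omega))
      (sq (by omega) (by omega))
  have h12 : φ (sig n 1) = φ (sig n 2) :=
    eq_of_braid_of_commute (braid le_rfl (by omega))
      (h24 ▸ (sig_commute le_rfl (by omega) (by omega)).map φ)
  rw [map_mul, map_inv, h12, mul_inv_cancel]

end Hom

lemma commutator_le_normalClosure_sig_two_mul_inv_pow (hn : 5 ≤ n) {k : ℕ} (hk : k = 1 ∨ k = 2) :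
    commutator (BraidGroup n) ≤ Subgroup.normalClosure {(sig n 2 * (sig n 1)⁻¹) ^ k} := by
  set N := Subgroup.normalClosure {(sig n 2 * (sig n 1)⁻¹) ^ k}
  have hN : QuotientGroup.mk' N ((sig n 2 * (sig n 1)⁻¹) ^ k) = 1 :=
    (QuotientGroup.eq_one_iff _).mpr (Subgroup.subset_normalClosure rfl)
  rw [← QuotientGroup.ker_mk' N]
  apply commutator_le_ker_of_map_sig_two_mul_inv_eq_one
  rcases hk with rfl | rfl
  · simpa only [pow_one] using hN
  · exact map_sig_two_mul_inv_eq_one_of_sq _ hn hN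

lemma normalClosure_eq_top_of_coe_eq_sig_two_mul_inv_pow (hn : 5 ≤ n) {k : ℕ}
    (hk : k = 1 ∨ k = 2) {b : commutator (BraidGroup n)}
    (hb : (b : BraidGroup n) = (sig n 2 * (sig n 1)⁻¹) ^ k) : Subgroup.normalClosure {b} = ⊤ := by
  have h4 : Commute (sig n 4) b := hb ▸
    (((sig_commute (by omega) le_rfl (by omega)).symm.mul_right
      (sig_commute le_rfl (by omega) (by omega)).symm.inv_right).pow_right k)
  refine Subgroup.normalClosure_eq_top_of_le
    (commutator_sup_centralizer_eq_top (by omega) (by omega) h4) ?_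
  rw [hb]
  exact commutator_le_normalClosure_sig_two_mul_inv_pow hn hk

end BraidGroup

/-- For n ≥ 8, in any nontrivial quotient of B'_n the image of σ₂σ₁⁻¹ has order at
least 3 (it is nontrivial and its square is nontrivial). -/
theorem image_order_ge_three (n : ℕ) (hn : 8 ≤ n) {G : Type*} [Group G]
    (q : ↥(commutator (BraidGroup n)) →* G) (hq : Function.Surjective q)
    (hG : Nontrivial G) (a : ↥(commutator (BraidGroup n)))
    (ha : (a : BraidGroup n) = sig n 2 * (sig n 1)⁻¹) :
    q a ≠ 1 ∧ (q a) ^ 2 ≠ 1 := by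
  have hne {k : ℕ} (hk : k = 1 ∨ k = 2) : q (a ^ k) ≠ 1 :=
    MonoidHom.map_ne_one_of_normalClosure_eq_top hq
      (BraidGroup.normalClosure_eq_top_of_coe_eq_sig_two_mul_inv_pow (by omega) hk
        (by rw [Subgroup.coe_pow, ha]))
  exact ⟨pow_one a ▸ hne (.inl rfl), map_pow q a 2 ▸ hne (.inr rfl)⟩
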